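/- Let M = (Q, E, δ) be an MDP and U ⊆ Q an end-component. Let σ_U be the memoryless strategy that at every history ending in a state s ∈ U ∩ Q₁ plays the uniform distribution on E(s) ∩ U (and at histories ending in a state s ∈ Q₁ \ U plays the uniform distribution on E(s)). Then for every s ∈ U, P_s^{σ_U}({ρ | Inf(ρ) = U}) = 1. -/

import Mathlib

open MeasureTheory Filter
open scoped Classical ENNReal

namespace MPP

/-- A Markov decision process: states `Q`, player-1 states `Q1` (the rest are
probabilistic), edge relation `E` with every state having a successor, and a
probabilistic transition function `δ` whose support at every probabilistic state
is exactly the set of successors. -/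
structure MDP (Q : Type) where
  Q1 : Set Q
  E : Q → Q → Prop
  E_nonempty : ∀ q, ∃ q', E q q'
  δ : Q → PMF Q
  δ_support : ∀ q, q ∉ Q1 → ∀ q', q' ∈ (δ q).support ↔ E q q'

/-- A strategy: given the history `h` (the states strictly before the current one)
and the current state `q`, if `q` is a player-1 state it selects a distribution on
successors of `q`. -/
structure Strategy {Q : Type} (M : MDP Q) where
  act : List Q → Q → PMF Q
  act_support : ∀ h q, q ∈ M.Q1 → ∀ q', q' ∈ (act h q).support → M.E q q'

variable {Q : Type}

/-- One step of the history-dependent transition kernel. -/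
noncomputable def MDP.step (M : MDP Q) (σ : Strategy M) (h : List Q) (q : Q) : PMF Q :=
  if q ∈ M.Q1 then σ.act h q else M.δ q

/-- Probability of traversing the finite sequence `future` starting at `q` with
past history `h`. -/
noncomputable def pathProb (M : MDP Q) (σ : Strategy M) : List Q → Q → List Q → ℝ≥0∞
  | _, _, [] => 1
  | h, q, q' :: rest => M.step σ h q q' * pathProb M σ (h ++ [q]) q' rest

/-- `μ` is the trajectory measure (Ionescu–Tulcea) on plays of `M` under strategy
`σ`, starting at `q`: it is the (unique) probability measure on `ℕ → Q` (product
σ-algebra) giving every cylinder its product probability. -/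
def IsTrajMeasure [MeasurableSpace Q] (M : MDP Q) (σ : Strategy M) (q : Q)
    (μ : Measure (ℕ → Q)) : Prop :=
  IsProbabilityMeasure μ ∧
    ∀ (n : ℕ) (f : ℕ → Q),
      μ {ρ | ∀ i ≤ n, ρ i = f i} =
        if f 0 = q then pathProb M σ [] q ((List.range n).map fun i => f (i + 1)) else 0

/-- The set of states occurring infinitely often in a play. -/
def infSet (ρ : ℕ → Q) : Set Q := {s | ∀ N, ∃ n, N ≤ n ∧ ρ n = s}

/-- End-component: nonempty, closed under probabilistic transitions, every state has
a successor inside, and strongly connected inside. -/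
def MDP.IsEndComponent (M : MDP Q) (U : Set Q) : Prop :=
  U.Nonempty ∧
    (∀ q ∈ U, q ∉ M.Q1 → (M.δ q).support ⊆ U) ∧
    (∀ q ∈ U, ∃ q' ∈ U, M.E q q') ∧
    ∀ q ∈ U, ∀ q' ∈ U, Relation.ReflTransGen (fun a b => a ∈ U ∧ b ∈ U ∧ M.E a b) q q'

/-- Energy level of the length-`n` prefix of a play. -/
def EL (w : Q → Q → ℤ) (ρ : ℕ → Q) (n : ℕ) : ℤ :=
  ∑ i ∈ Finset.range n, w (ρ i) (ρ (i + 1))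

/-- Mean payoff (liminf of averages) of a play. -/
noncomputable def MP (w : Q → Q → ℤ) (ρ : ℕ → Q) : ℝ :=
  liminf (fun n => (EL w ρ n : ℝ) / n) atTop

/-- Parity objective: the minimal priority visited infinitely often is even. -/
def ParitySet (p : Q → ℕ) : Set (ℕ → Q) := {ρ | Even (sInf (p '' infSet ρ))}

def MeanPayoffGe (w : Q → Q → ℤ) (ν : ℝ) : Set (ℕ → Q) := {ρ | ν ≤ MP w ρ}

def MeanPayoffGt (w : Q → Q → ℤ) (ν : ℝ) : Set (ℕ → Q) := {ρ | ν < MP w ρ}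

/-- Energy objective with initial credit `c₀`. -/
def PosEnergy (w : Q → Q → ℤ) (c₀ : ℕ) : Set (ℕ → Q) :=
  {ρ | ∀ n, 0 ≤ (c₀ : ℤ) + EL w ρ n}

/-- Büchi objective: some state of `B` is visited infinitely often. -/
def Buchi (B : Set Q) : Set (ℕ → Q) := {ρ | (infSet ρ ∩ B).Nonempty}

/-- Expected mean-payoff value: supremum over strategies of the expectation of the
mean payoff under the trajectory measure. -/
noncomputable def ValMP [MeasurableSpace Q] (M : MDP Q) (w : Q → Q → ℤ) (q : Q) : ℝ :=
  sSup {x | ∃ σ : Strategy M, ∃ μ : Measure (ℕ → Q),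
    IsTrajMeasure M σ q μ ∧ x = ∫ ρ, MP w ρ ∂μ}

/-!
A memoryless strategy turns the MDP into a finite Markov chain with kernel `M.step σ []`.
Inside an end-component the uniform strategy makes `U` closed under this kernel and strongly
connected through edges of positive probability. Closedness keeps the play in `U`. For `u ∈ U`,
every state of `U` has a path of positive probability through `u`, so for some `m` the
probability of avoiding `u` for `m` steps is at most some `c < 1`, uniformly on `U`; by the
Markov property, avoiding `u` for `m * K` steps after any time `N` has probability at most
`c ^ K → 0`. Hence almost surely every state of `U`, and no other state, is visited infinitely
often.
-/

theorem _root_.PMF.sum_coe_eq_one [Fintype Q] (p : PMF Q) : ∑ a, p a = 1 := by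
  rw [← tsum_fintype (L := SummationFilter.unconditional Q)]
  exact p.tsum_coe

section PathMass

variable (P : Q → PMF Q)

noncomputable def pathWeight : Q → List Q → ℝ≥0∞
  | _, [] => 1
  | q, a :: l => P q a * pathWeight a l

theorem pathWeight_le_one (q : Q) (l : List Q) : pathWeight P q l ≤ 1 := by
  induction l generalizing q with
  | nil => exact le_rfl
  | cons a l ih => exact mul_le_one' (PMF.coe_le_one _ _) (ih a)

theorem pathWeight_ne_zero {q : Q} {l : List Q}
    (h : List.IsChain (fun a b => P a b ≠ 0) (q :: l)) : pathWeight P q l ≠ 0 := by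
  induction l generalizing q with
  | nil => exact one_ne_zero
  | cons a l ih =>
    rw [List.isChain_cons_cons] at h
    exact mul_ne_zero h.1 (ih h.2)

theorem exists_mem_pathWeight_ne_zero {q a u : Q} (ha : P q a ≠ 0)
    (h : Relation.ReflTransGen (fun a b => P a b ≠ 0) a u) :
    ∃ l, u ∈ l ∧ pathWeight P q l ≠ 0 := by
  obtain ⟨l, hchain, hlast⟩ := List.exists_isChain_cons_of_relationReflTransGen h
  exact ⟨a :: l, hlast ▸ List.getLast_mem _, pathWeight_ne_zero P (hchain.cons_cons ha)⟩

theorem sum_mul_le_sum_mul_of_support_subset {P : Q → PMF Q} {U : Set Q}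
    (hcl : ∀ q ∈ U, (P q).support ⊆ U) {q : Q}
    (hq : q ∈ U) (s : Finset Q) {f g : Q → ℝ≥0∞} (hfg : ∀ a ∈ U, f a ≤ g a) :
    ∑ a ∈ s, P q a * f a ≤ ∑ a ∈ s, P q a * g a := by
  refine Finset.sum_le_sum fun a _ => ?_
  by_cases ha : P q a = 0
  · simp [ha]
  · exact mul_le_mul_right (hfg a (hcl q hq ha)) _

variable [Fintype Q]

/-- `pathMass P A q n` is the probability that the first `n` steps of the chain from `q` satisfy
`A 0, …, A (n - 1)` in turn. -/
noncomputable def pathMass : (ℕ → Q → Prop) → Q → ℕ → ℝ≥0∞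
  | _, _, 0 => 1
  | A, q, n + 1 => ∑ a ∈ Finset.univ.filter (A 0), P q a * pathMass (fun i => A (i + 1)) a n

theorem pathMass_le_one (A : ℕ → Q → Prop) (q : Q) (n : ℕ) : pathMass P A q n ≤ 1 := by
  induction n generalizing A q with
  | zero => exact le_rfl
  | succ n ih =>
    calc pathMass P A q (n + 1)
        ≤ ∑ a ∈ Finset.univ.filter (A 0), P q a :=
          Finset.sum_le_sum fun a _ => mul_le_of_le_one_right' (ih _ a)
      _ ≤ ∑ a, P q a := Finset.sum_le_sum_of_subset (Finset.filter_subset _ _)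
      _ = 1 := (P q).sum_coe_eq_one

theorem sum_ofFn_eq_pathMass (A : ℕ → Q → Prop) (q : Q) (n : ℕ) :
    ∑ g : Fin n → Q, (if ∀ i : Fin n, A i (g i) then pathWeight P q (List.ofFn g) else 0) =
      pathMass P A q n := by
  induction n generalizing A q with
  | zero => simp [pathMass, pathWeight]
  | succ n ih =>
    rw [← (Fin.consEquiv fun _ => Q).sum_comp, Fintype.sum_prod_type, pathMass,
      Finset.sum_filter]
    refine Finset.sum_congr rfl fun a _ => ?_
    simp only [Fin.consEquiv_apply, Fin.forall_fin_succ, Fin.cons_zero, Fin.cons_succ,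
      Fin.val_zero, Fin.val_succ, List.ofFn_succ, pathWeight]
    split_ifs with ha
    · simp only [ha, true_and, ← ih, Finset.mul_sum, mul_ite, mul_zero]
    · simp [ha]

theorem pathMass_avoid_add_pathWeight_le_one {u : Q} {q : Q} {l : List Q} (hu : u ∈ l) :
    pathMass P (fun _ a => a ≠ u) q l.length + pathWeight P q l ≤ 1 := by
  induction l generalizing q with
  | nil => exact absurd hu List.not_mem_nil
  | cons a l ih =>
    have hterm : ∀ x, (if x ≠ u then P q x * pathMass P (fun _ a => a ≠ u) x l.length else 0) +
        (if x = a then P q x * pathWeight P a l else 0) ≤ P q x := by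
      intro x
      rcases eq_or_ne x a with rfl | hxa
      · rcases eq_or_ne x u with rfl | hxu
        · simpa using mul_le_of_le_one_right' (pathWeight_le_one P x l)
        · have : u ∈ l := (List.mem_cons.1 hu).resolve_left hxu.symm
          simpa [hxu, ← mul_add] using mul_le_of_le_one_right' (ih this)
      · rcases eq_or_ne x u with rfl | hxu
        · simp [hxa]
        · simpa [hxa, hxu] using mul_le_of_le_one_right' (pathMass_le_one P _ x _)
    calc pathMass P (fun _ a => a ≠ u) q (a :: l).length + pathWeight P q (a :: l)
        = ∑ x, ((if x ≠ u then P q x * pathMass P (fun _ a => a ≠ u) x l.length else 0) +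
            (if x = a then P q x * pathWeight P a l else 0)) := by
          rw [Finset.sum_add_distrib, Finset.sum_ite_eq', if_pos (Finset.mem_univ a),
            ← Finset.sum_filter, List.length_cons, pathMass, pathWeight]
          congr
      _ ≤ ∑ x, P q x := Finset.sum_le_sum fun x _ => hterm x
      _ = 1 := (P q).sum_coe_eq_one

variable {P} {U : Set Q}

theorem pathMass_add_le_mul (hcl : ∀ q ∈ U, (P q).support ⊆ U) {A : Q → Prop} {m : ℕ}
    {C : ℝ≥0∞} (hC : ∀ a ∈ U, pathMass P (fun _ => A) a m ≤ C) (n : ℕ) :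
    ∀ q ∈ U, pathMass P (fun _ => A) q (n + m) ≤ C * pathMass P (fun _ => A) q n := by
  induction n with
  | zero => simpa [pathMass] using hC
  | succ n ih =>
    intro q hq
    rw [Nat.add_right_comm, pathMass, pathMass, Finset.mul_sum]
    simp_rw [mul_left_comm C]
    exact sum_mul_le_sum_mul_of_support_subset hcl hq _ ih

theorem pathMass_le_pathMass_of_le (A : Q → Prop) (q : Q) {m n : ℕ} (hmn : m ≤ n) :
    pathMass P (fun _ => A) q n ≤ pathMass P (fun _ => A) q m := by
  obtain ⟨d, rfl⟩ := Nat.exists_eq_add_of_le hmn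
  simpa using pathMass_add_le_mul (U := Set.univ) (fun _ _ => Set.subset_univ _)
    (fun a _ => pathMass_le_one P _ a d) m q trivial

theorem pathMass_mul_le_pow (hcl : ∀ q ∈ U, (P q).support ⊆ U) {A : Q → Prop} {m : ℕ}
    {C : ℝ≥0∞} (hC : ∀ a ∈ U, pathMass P (fun _ => A) a m ≤ C) (K : ℕ) :
    ∀ q ∈ U, pathMass P (fun _ => A) q (m * K) ≤ C ^ K := by
  induction K with
  | zero => intro q _; simp [pathMass]
  | succ K ih =>
    intro q hq
    calc pathMass P (fun _ => A) q (m * K + m)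
        ≤ C * pathMass P (fun _ => A) q (m * K) := pathMass_add_le_mul hcl hC _ q hq
      _ ≤ C * C ^ K := by gcongr; exact ih q hq
      _ = C ^ (K + 1) := (pow_succ' C K).symm

theorem pathMass_delay_le (hcl : ∀ q ∈ U, (P q).support ⊆ U) {A : Q → Prop} {r : ℕ}
    {C : ℝ≥0∞} (hC : ∀ a ∈ U, pathMass P (fun _ => A) a r ≤ C) (N : ℕ) :
    ∀ q ∈ U, pathMass P (fun i a => N ≤ i → A a) q (N + r) ≤ C := by
  induction N with
  | zero => simpa using hC
  | succ N ih =>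
    intro q hq
    have hshift : (fun i a => N + 1 ≤ i + 1 → A a) = fun i a => N ≤ i → A a := by
      simp
    calc pathMass P (fun i a => N + 1 ≤ i → A a) q (N + 1 + r)
        = ∑ a, P q a * pathMass P (fun i a => N ≤ i → A a) a (N + r) := by
          rw [Nat.add_right_comm, pathMass, hshift]
          simp
      _ ≤ ∑ a, P q a * C := sum_mul_le_sum_mul_of_support_subset hcl hq _ ih
      _ = C := by rw [← Finset.sum_mul, (P q).sum_coe_eq_one, one_mul]

theorem exists_pathMass_avoid_le_lt_one (hcl : ∀ q ∈ U, (P q).support ⊆ U)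
    (hconn : ∀ q ∈ U, ∀ u ∈ U, Relation.ReflTransGen (fun a b => P a b ≠ 0) q u)
    {u : Q} (hu : u ∈ U) :
    ∃ m, ∃ c < 1, ∀ q ∈ U, pathMass P (fun _ a => a ≠ u) q m ≤ c := by
  have hpath : ∀ q, ∃ l, q ∈ U → u ∈ l ∧ pathWeight P q l ≠ 0 := by
    intro q
    by_cases hq : q ∈ U
    · obtain ⟨a, ha⟩ := (P q).support_nonempty
      obtain ⟨l, hl⟩ := exists_mem_pathWeight_ne_zero P ha (hconn a (hcl q hq ha) u hu)
      exact ⟨l, fun _ => hl⟩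
    · exact ⟨[], fun h => absurd h hq⟩
  choose L hL using hpath
  refine ⟨Finset.univ.sup fun q => (L q).length,
    (Finset.univ.filter (· ∈ U)).sup fun q => 1 - pathWeight P q (L q), ?_, fun q hq => ?_⟩
  · refine (Finset.sup_lt_iff zero_lt_one).2 fun q hq => ?_
    exact ENNReal.sub_lt_self ENNReal.one_ne_top one_ne_zero (hL q (by simpa using hq)).2
  · calc pathMass P (fun _ a => a ≠ u) q (Finset.univ.sup fun q => (L q).length)
        ≤ pathMass P (fun _ a => a ≠ u) q (L q).length :=
          pathMass_le_pathMass_of_le _ q (Finset.le_sup (f := fun q => (L q).length) (Finset.mem_univ q))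
      _ ≤ 1 - pathWeight P q (L q) :=
          ENNReal.le_sub_of_add_le_right (ne_top_of_le_ne_top ENNReal.one_ne_top
            (pathWeight_le_one P q _)) (pathMass_avoid_add_pathWeight_le_one P (hL q hq).1)
      _ ≤ _ := Finset.le_sup (f := fun q => 1 - pathWeight P q (L q)) (by simpa using hq)

end PathMass

section MarkovChain

variable [MeasurableSpace Q] {P : Q → PMF Q} {s : Q} {μ : Measure (ℕ → Q)}

def IsMarkovChainMeasure (P : Q → PMF Q) (s : Q) (μ : Measure (ℕ → Q)) : Prop :=
  IsProbabilityMeasure μ ∧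
    ∀ (n : ℕ) (f : ℕ → Q),
      μ {ρ | ∀ i ≤ n, ρ i = f i} =
        if f 0 = s then pathWeight P s ((List.range n).map fun i => f (i + 1)) else 0

theorem IsMarkovChainMeasure.measure_prefix (hμ : IsMarkovChainMeasure P s μ) {n : ℕ} (a : Q)
    (g : Fin n → Q) :
    μ {ρ | ρ 0 = a ∧ ∀ i : Fin n, ρ (i + 1) = g i} =
      if a = s then pathWeight P s (List.ofFn g) else 0 := by
  set f : ℕ → Q := fun i => (a :: List.ofFn g).getD i a
  have hset : {ρ : ℕ → Q | ρ 0 = a ∧ ∀ i : Fin n, ρ (i + 1) = g i} =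
      {ρ | ∀ i ≤ n, ρ i = f i} := by
    ext ρ
    constructor
    · rintro ⟨h0, h⟩ (_ | i) hi
      · exact h0
      · simpa [f, Nat.lt_of_succ_le hi] using h ⟨i, hi⟩
    · intro h
      exact ⟨h 0 (Nat.zero_le n), fun i => by simpa [f] using h (i + 1) i.2⟩
  have hlist : (List.range n).map (fun i => f (i + 1)) = List.ofFn g :=
    List.ext_getElem (by simp) fun i hi _ => by
      rw [List.length_map, List.length_range] at hi
      simp [f, hi]
  rw [hset, hμ.2, hlist]
  rfl

theorem IsMarkovChainMeasure.measure_eq_pathMass [Fintype Q] [MeasurableSingletonClass Q]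
    (hμ : IsMarkovChainMeasure P s μ) (A : ℕ → Q → Prop) (n : ℕ) :
    μ {ρ | ∀ i < n, A i (ρ (i + 1))} = pathMass P A s n := by
  set π : (ℕ → Q) → Q × (Fin n → Q) := fun ρ => (ρ 0, fun i => ρ (i + 1))
  have hπ : Measurable π := by fun_prop
  set T := (Finset.univ : Finset Q) ×ˢ
    Finset.univ.filter fun g : Fin n → Q => ∀ i : Fin n, A i (g i)
  have hev : {ρ | ∀ i < n, A i (ρ (i + 1))} = π ⁻¹' T := by
    ext ρ
    simp [π, T, Fin.forall_iff]
  have hfiber : ∀ x : Q × (Fin n → Q),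
      π ⁻¹' {x} = {ρ | ρ 0 = x.1 ∧ ∀ i : Fin n, ρ (i + 1) = x.2 i} := by
    intro x
    ext ρ
    simp [π, Prod.ext_iff, funext_iff]
  rw [hev, ← sum_measure_preimage_singleton T fun _ _ => hπ (measurableSet_singleton _),
    Finset.sum_product, Finset.sum_comm, ← sum_ofFn_eq_pathMass, ← Finset.sum_filter]
  simp [hfiber, hμ.measure_prefix]

variable [Fintype Q] [MeasurableSingletonClass Q] {U : Set Q}

theorem IsMarkovChainMeasure.measure_delay_le (hμ : IsMarkovChainMeasure P s μ) (hs : s ∈ U)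
    (hcl : ∀ q ∈ U, (P q).support ⊆ U) {A : Q → Prop} {r : ℕ} {C : ℝ≥0∞}
    (hC : ∀ a ∈ U, pathMass P (fun _ => A) a r ≤ C) (N : ℕ) :
    μ {ρ | ∀ i < N + r, N ≤ i → A (ρ (i + 1))} ≤ C := by
  rw [hμ.measure_eq_pathMass fun i a => N ≤ i → A a]
  exact pathMass_delay_le hcl hC N s hs

theorem IsMarkovChainMeasure.ae_mem (hμ : IsMarkovChainMeasure P s μ) (hs : s ∈ U)
    (hcl : ∀ q ∈ U, (P q).support ⊆ U) : ∀ᵐ ρ ∂μ, ∀ n, ρ (n + 1) ∈ U := by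
  have hleave : ∀ a ∈ U, pathMass P (fun _ x => x ∉ U) a 1 ≤ 0 := fun a ha => by
    simp only [pathMass, mul_one, nonpos_iff_eq_zero]
    exact Finset.sum_eq_zero fun x hx => by
      by_contra h
      exact (Finset.mem_filter.1 hx).2 (hcl a ha h)
  refine ae_all_iff.2 fun N => measure_mono_null (t := {ρ | ∀ i < N + 1, N ≤ i → ρ (i + 1) ∉ U})
    (fun ρ hρ i hi hNi => ?_) (nonpos_iff_eq_zero.1 (hμ.measure_delay_le hs hcl hleave N))
  rwa [show i = N by omega]

theorem IsMarkovChainMeasure.ae_mem_infSet (hμ : IsMarkovChainMeasure P s μ) (hs : s ∈ U)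
    (hcl : ∀ q ∈ U, (P q).support ⊆ U)
    (hconn : ∀ q ∈ U, ∀ u ∈ U, Relation.ReflTransGen (fun a b => P a b ≠ 0) q u)
    {u : Q} (hu : u ∈ U) : ∀ᵐ ρ ∂μ, u ∈ infSet ρ := by
  obtain ⟨m, c, hc, hC⟩ := exists_pathMass_avoid_le_lt_one hcl hconn hu
  refine ae_all_iff.2 fun N => ?_
  have hK : ∀ K, μ {ρ | ∀ k, N < k → ρ k ≠ u} ≤ c ^ K := fun K => by
    have hsub : {ρ : ℕ → Q | ∀ k, N < k → ρ k ≠ u} ⊆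
        {ρ | ∀ i < N + m * K, N ≤ i → ρ (i + 1) ≠ u} :=
      fun ρ hρ i _ hi => hρ (i + 1) (by omega)
    exact (measure_mono hsub).trans (hμ.measure_delay_le hs hcl (pathMass_mul_le_pow hcl hC K) N)
  have hnull : μ {ρ | ∀ k, N < k → ρ k ≠ u} = 0 :=
    nonpos_iff_eq_zero.1 (ge_of_tendsto' (ENNReal.tendsto_pow_atTop_nhds_zero_of_lt_one hc) hK)
  exact measure_mono_null (fun ρ hρ k (hk : N < k) hρk => hρ ⟨k, hk.le, hρk⟩) hnull

theorem IsMarkovChainMeasure.ae_infSet_eq (hμ : IsMarkovChainMeasure P s μ) (hs : s ∈ U)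
    (hcl : ∀ q ∈ U, (P q).support ⊆ U)
    (hconn : ∀ q ∈ U, ∀ u ∈ U, Relation.ReflTransGen (fun a b => P a b ≠ 0) q u) :
    ∀ᵐ ρ ∂μ, infSet ρ = U := by
  have hvisit : ∀ᵐ ρ ∂μ, ∀ u ∈ U, u ∈ infSet ρ :=
    (ae_ball_iff U.toFinite.countable).2 fun u hu => hμ.ae_mem_infSet hs hcl hconn hu
  filter_upwards [hμ.ae_mem hs hcl, hvisit] with ρ hmem hvisit
  refine Set.Subset.antisymm (fun v hv => ?_) hvisit
  obtain ⟨n, hn, rfl⟩ := hv 1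
  obtain ⟨i, rfl⟩ := Nat.exists_eq_add_of_le' hn
  exact hmem i

end MarkovChain

section EndComponent

variable {M : MDP Q} {σ : Strategy M}

theorem pathProb_eq_pathWeight (hσ : ∀ h h' q, σ.act h q = σ.act h' q) (h : List Q) (q : Q)
    (l : List Q) : pathProb M σ h q l = pathWeight (M.step σ []) q l := by
  induction l generalizing h q with
  | nil => rfl
  | cons a l ih =>
    have hstep : M.step σ h q = M.step σ [] q := by
      unfold MDP.step
      rw [hσ h []]
    rw [pathProb, pathWeight, ih, hstep]

theorem IsTrajMeasure.isMarkovChainMeasure [MeasurableSpace Q] {s : Q} {μ : Measure (ℕ → Q)}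
    (hσ : ∀ h h' q, σ.act h q = σ.act h' q) (hμ : IsTrajMeasure M σ s μ) :
    IsMarkovChainMeasure (M.step σ []) s μ :=
  ⟨hμ.1, fun n f => by rw [hμ.2, pathProb_eq_pathWeight hσ]⟩

theorem MDP.IsEndComponent.step_ne_zero_iff {U : Set Q} (hU : M.IsEndComponent U)
    (hσU : ∀ q ∈ U, q ∈ M.Q1 → ∀ a, σ.act [] q a ≠ 0 ↔ M.E q a ∧ a ∈ U) {q : Q} (hq : q ∈ U)
    (a : Q) : M.step σ [] q a ≠ 0 ↔ M.E q a ∧ a ∈ U := by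
  unfold MDP.step
  split_ifs with hq1
  · exact hσU q hq hq1 a
  · exact ⟨fun ha => ⟨(M.δ_support q hq1 a).1 ha, hU.2.1 q hq hq1 ha⟩,
      fun ha => (M.δ_support q hq1 a).2 ha.1⟩

end EndComponent

theorem uniform_strategy_inf_eq_end_component [Fintype Q]
    [MeasurableSpace Q] [MeasurableSingletonClass Q]
    (M : MDP Q) (U : Set Q) (hU : M.IsEndComponent U)
    (σU : Strategy M)
    (hmemless : ∀ h h' q, σU.act h q = σU.act h' q)
    (hunif : ∀ (h : List Q) (s : Q), s ∈ M.Q1 → ∀ q' : Q,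
      (σU.act h s) q' =
        if s ∈ U then
          (if M.E s q' ∧ q' ∈ U then
            ((Finset.univ.filter fun x => M.E s x ∧ x ∈ U).card : ℝ≥0∞)⁻¹ else 0)
        else
          (if M.E s q' then ((Finset.univ.filter fun x => M.E s x).card : ℝ≥0∞)⁻¹ else 0))
    (s : Q) (hs : s ∈ U) (μ : Measure (ℕ → Q)) (hμ : IsTrajMeasure M σU s μ) :
    μ {ρ | infSet ρ = U} = 1 := by
  have hσU : ∀ q ∈ U, q ∈ M.Q1 → ∀ a, σU.act [] q a ≠ 0 ↔ M.E q a ∧ a ∈ U := by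
    intro q hq hq1 a
    rw [hunif [] q hq1, if_pos hq]
    split_ifs with ha <;> simp [ha]
  have hstep := fun q (hq : q ∈ U) => hU.step_ne_zero_iff hσU hq
  have hcl : ∀ q ∈ U, (M.step σU [] q).support ⊆ U := fun q hq a ha => ((hstep q hq a).1 ha).2
  have hconn : ∀ q ∈ U, ∀ u ∈ U, Relation.ReflTransGen (fun a b => M.step σU [] a b ≠ 0) q u :=
    fun q hq u hu => Relation.ReflTransGen.mono
      (fun a b (hab : a ∈ U ∧ b ∈ U ∧ M.E a b) => (hstep a hab.1 b).2 ⟨hab.2.2, hab.2.1⟩) q u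
      (hU.2.2.2 q hq u hu)
  have hae := (hμ.isMarkovChainMeasure hmemless).ae_infSet_eq hs hcl hconn
  have := hμ.1
  exact (measure_congr (ae_eq_univ.2 hae)).trans measure_univ

end MPP
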